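/- Let $X_0, X_1$ be disjoint compact subsets of a symplectic manifold $M$ and $G \in C^\infty_c(M)$ with complete flow $g_t$. Suppose $F \in C^\infty_c(M)$ satisfies $F|_{X_0} \leq 0$ and $F|_{X_1} \geq 1$, and suppose there exist $x \in X_0 \cup X_1$ and $T \neq 0$ with: $x \in X_0$ and $g_T x \in X_1$, or $x \in X_1$ and $g_T x \in X_0$. Then $\|\{F, G\}\|_\infty \geq 1/|T|$. -/

import Mathlib

open Set

/-- The sup-norm (uniform norm) `‖f‖_∞ = sup_{x ∈ M} |f(x)|` of a function. -/
noncomputable def supNorm {M : Type*} (f : M → ℝ) : ℝ := ⨆ x, |f x|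

/-- An abstract model of a symplectic manifold `M`, recording the predicate of being a
smooth function on `M` and the Poisson bracket `{·,·}` on smooth functions, together with
its basic algebraic properties (ℝ-bilinearity, antisymmetry, and the Leibniz rule). -/
structure PoissonManifold (M : Type*) [TopologicalSpace M] where
  /-- `IsSmooth f` means `f ∈ C^∞(M)`. -/
  IsSmooth : (M → ℝ) → Prop
  /-- The Poisson bracket `{f, g}` associated to the symplectic form. -/
  bracket : (M → ℝ) → (M → ℝ) → M → ℝ
  isSmooth_continuous : ∀ {f}, IsSmooth f → Continuous f
  isSmooth_const : ∀ c : ℝ, IsSmooth (fun _ => c)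
  isSmooth_add : ∀ {f g}, IsSmooth f → IsSmooth g → IsSmooth (f + g)
  isSmooth_mul : ∀ {f g}, IsSmooth f → IsSmooth g → IsSmooth (f * g)
  isSmooth_smul : ∀ (c : ℝ) {f}, IsSmooth f → IsSmooth (c • f)
  isSmooth_bracket : ∀ {f g}, IsSmooth f → IsSmooth g → IsSmooth (bracket f g)
  bracket_add_left : ∀ f g h, bracket (f + g) h = bracket f h + bracket g h
  bracket_smul_left : ∀ (c : ℝ) f g, bracket (c • f) g = c • bracket f g
  bracket_antisymm : ∀ f g, bracket f g = - bracket g f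
  bracket_leibniz : ∀ f g h, bracket (f * g) h = f * bracket g h + g * bracket f h

open Filter Topology

/-! Along the flow line through `x`, `τ ↦ F (g τ x)` has derivative `{F, G} (g τ x)` and changes by
at least `1` between `τ = 0` and `τ = T`, so the mean value theorem gives a point where
`|{F, G}| ≥ 1 / |T|`. Since `supNorm` is a `ciSup`, which is `0` for unbounded functions, one also
needs `{F, G}` to be bounded: on `tsupport F` by compactness, and at a point `y` outside it because
`τ ↦ F (g τ y)` vanishes at `0`, so its derivative there is a limit of slopes over nearby times at
which `F (g τ y) ≠ 0`, i.e. at which `g τ y` lies in the support of `F`. -/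

/-- Near a zero `t` with `φ' t ≠ 0`, `φ` is nonzero on some `(a, t)`, so the slopes from the left
at `t` are bounded by `C` through the mean value inequality. -/
lemma abs_deriv_le_of_abs_deriv_le_of_ne_zero {φ φ' : ℝ → ℝ} {C : ℝ}
    (hφ : ∀ t, HasDerivAt φ (φ' t) t) (hC0 : 0 ≤ C) (hC : ∀ t, φ t ≠ 0 → |φ' t| ≤ C)
    (t : ℝ) : |φ' t| ≤ C := by
  by_cases hφt : φ t ≠ 0
  · exact hC t hφt
  by_cases hφ't : φ' t = 0
  · simpa [hφ't] using hC0
  have hne : ∀ᶠ s in 𝓝[<] t, φ s ≠ 0 :=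
    nhdsLT_le_nhdsNE t ((hφ t).eventually_ne hφ't)
  obtain ⟨a, hat, hIoo⟩ := mem_nhdsLT_iff_exists_Ioo_subset.1 hne
  have hslope : ∀ᶠ s in 𝓝[<] t, |slope φ t s| ≤ C := by
    filter_upwards [Ioo_mem_nhdsLT hat] with s hs
    have hmvt := norm_image_sub_le_of_norm_deriv_le_segment' (f := φ) (f' := φ')
      (fun u _ => (hφ u).hasDerivWithinAt)
      (fun u hu => hC u (hIoo ⟨hs.1.trans_le hu.1, hu.2⟩)) t ⟨hs.2.le, le_rfl⟩
    have hts : 0 < t - s := sub_pos.2 hs.2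
    rw [Real.norm_eq_abs] at hmvt
    rw [slope_comm, slope_def_field, abs_div, abs_of_pos hts]
    exact div_le_of_le_mul₀ hts.le hC0 hmvt
  exact le_of_tendsto
    ((hφ t).tendsto_slope.mono_left (nhdsLT_le_nhdsNE t)).abs hslope

lemma abs_le_of_flow_of_abs_le_on_support {M : Type*} {f b : M → ℝ} {g : ℝ → M → M} {C : ℝ}
    (hg0 : ∀ y, g 0 y = y)
    (hflow : ∀ y t, HasDerivAt (fun τ => f (g τ y)) (b (g t y)) t)
    (hC0 : 0 ≤ C) (hC : ∀ z ∈ Function.support f, |b z| ≤ C) (y : M) : |b y| ≤ C := by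
  simpa [hg0] using abs_deriv_le_of_abs_deriv_le_of_ne_zero (hflow y) hC0
    (fun t ht => hC (g t y) ht) 0

lemma bddAbove_abs_of_flow {M : Type*} [TopologicalSpace M] {f b : M → ℝ} {g : ℝ → M → M}
    (hg0 : ∀ y, g 0 y = y)
    (hflow : ∀ y t, HasDerivAt (fun τ => f (g τ y)) (b (g t y)) t)
    (hb : Continuous b) (hf : HasCompactSupport f) : BddAbove (range fun y => |b y|) := by
  obtain ⟨C, hC⟩ := hf.exists_bound_of_continuousOn hb.continuousOn
  refine ⟨max C 0, forall_mem_range.2 fun y => ?_⟩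
  refine abs_le_of_flow_of_abs_le_on_support hg0 hflow (le_max_right C 0) (fun z hz => ?_) y
  exact (hC z (subset_tsupport f hz)).trans (le_max_left C 0)

lemma exists_abs_sub_le_abs_deriv_mul {φ φ' : ℝ → ℝ} (hφ : ∀ t, HasDerivAt φ (φ' t) t)
    (a b : ℝ) : ∃ c, |φ b - φ a| ≤ |φ' c| * |b - a| := by
  wlog hab : a < b generalizing a b
  · rcases (not_lt.1 hab).lt_or_eq with hba | rfl
    · simpa only [abs_sub_comm] using this b a hba
    · exact ⟨0, by simp⟩
  have hcont : Continuous φ := continuous_iff_continuousAt.2 fun t => (hφ t).continuousAt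
  obtain ⟨c, -, hc⟩ := exists_hasDerivAt_eq_slope φ φ' hab hcont.continuousOn fun t _ => hφ t
  refine ⟨c, le_of_eq ?_⟩
  rw [hc, abs_div, div_mul_cancel₀ _ (abs_pos.2 (sub_ne_zero.2 hab.ne')).ne']

lemma abs_le_supNorm {M : Type*} {f : M → ℝ} (hf : BddAbove (range fun x => |f x|)) (x : M) :
    |f x| ≤ supNorm f :=
  le_ciSup hf x

theorem bracket_norm_ge_of_chord_general
    {M : Type*} [TopologicalSpace M] (P : PoissonManifold M)
    (X0 X1 : Set M)
    (G : M → ℝ) (hG : P.IsSmooth G)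
    (g : ℝ → M → M) (hg0 : ∀ x, g 0 x = x)
    (hgflow : ∀ (F : M → ℝ), P.IsSmooth F → ∀ (x : M) (t : ℝ),
      HasDerivAt (fun τ => F (g τ x)) (P.bracket F G (g t x)) t)
    (F : M → ℝ) (hF : P.IsSmooth F) (hFc : HasCompactSupport F)
    (hFX0 : ∀ x ∈ X0, F x ≤ 0) (hFX1 : ∀ x ∈ X1, 1 ≤ F x)
    (x : M) (T : ℝ)
    (hchord : (x ∈ X0 ∧ g T x ∈ X1) ∨ (x ∈ X1 ∧ g T x ∈ X0)) :
    1 / |T| ≤ supNorm (P.bracket F G) := by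
  have hflow := hgflow F hF
  have hbdd := bddAbove_abs_of_flow hg0 hflow
    (P.isSmooth_continuous (P.isSmooth_bracket hF hG)) hFc
  have hgap : 1 ≤ |F (g T x) - F x| := by
    rcases hchord with ⟨hx0, hx1⟩ | ⟨hx1, hx0⟩
    · linarith [hFX0 x hx0, hFX1 _ hx1, le_abs_self (F (g T x) - F x)]
    · linarith [hFX1 x hx1, hFX0 _ hx0, neg_abs_le (F (g T x) - F x)]
  obtain ⟨c, hc⟩ := exists_abs_sub_le_abs_deriv_mul (hflow x) 0 T
  rw [hg0, sub_zero] at hc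
  have hsup := abs_le_supNorm hbdd (g c x)
  refine div_le_of_le_mul₀ (abs_nonneg T) ((abs_nonneg _).trans hsup) ?_
  calc 1 ≤ |F (g T x) - F x| := hgap
    _ ≤ |P.bracket F G (g c x)| * |T| := hc
    _ ≤ supNorm (P.bracket F G) * |T| := by gcongr

/-- If the Hamiltonian flow `g` of `G` carries a point of `X₀` to `X₁`
(or vice versa) in time `T ≠ 0`, then any smooth compactly supported `F` with `F ≤ 0` on
`X₀` and `F ≥ 1` on `X₁` satisfies `‖{F,G}‖_∞ ≥ 1/|T|`. -/
theorem bracket_norm_ge_of_chord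
    {M : Type*} [TopologicalSpace M] (P : PoissonManifold M)
    (X0 X1 : Set M) (hX0 : IsCompact X0) (hX1 : IsCompact X1) (hX : X0 ∩ X1 = ∅)
    (G : M → ℝ) (hG : P.IsSmooth G) (hGc : HasCompactSupport G)
    (g : ℝ → M → M) (hg0 : ∀ x, g 0 x = x)
    (hgflow : ∀ (F : M → ℝ), P.IsSmooth F → ∀ (x : M) (t : ℝ),
      HasDerivAt (fun τ => F (g τ x)) (P.bracket F G (g t x)) t)
    (F : M → ℝ) (hF : P.IsSmooth F) (hFc : HasCompactSupport F)
    (hFX0 : ∀ x ∈ X0, F x ≤ 0) (hFX1 : ∀ x ∈ X1, 1 ≤ F x)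
    (x : M) (T : ℝ) (hT : T ≠ 0)
    (hchord : (x ∈ X0 ∧ g T x ∈ X1) ∨ (x ∈ X1 ∧ g T x ∈ X0)) :
    1 / |T| ≤ supNorm (P.bracket F G) :=
  bracket_norm_ge_of_chord_general P X0 X1 G hG g hg0 hgflow F hF hFc hFX0 hFX1 x T hchord
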